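/- arXiv:math/0601074 — 6 statements merged into one kernel-verified Lean document; each statement's English description precedes it below -/
import Mathlib

section
/- For sequences u with finitely many nonzero entries, the following identity holds: -(B(u,u), A^{γ/α} u) = (λ^{2γ+1} - λ) · Σ_{n=1}^∞ λ^{(1+2γ)n} u_n² u_{n+1}, where (A^{γ/α}u)_n = λ^{2γn} u_n. -/
/-!
Write `h n = λ^{(1+2γ)n} u_n² u_{n+1}`. Each term of the pairing splits as
`λ^{2γ+1} h n - λ h (n+1)`, so the sum telescopes to `(λ^{2γ+1} - λ) Σ h (n+1)`,
the boundary term `h 0` vanishing because `u_0 = 0`.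
-/

open Real

noncomputable def triadTerm (l γ : ℝ) (u : ℕ → ℝ) (n : ℕ) : ℝ :=
  l ^ ((1 + 2 * γ) * n) * u n ^ 2 * u (n + 1)

lemma pow_mul_rpow_mul_natCast {x : ℝ} (hx : 0 < x) (a : ℝ) (k : ℕ) :
    x ^ k * x ^ (a * k) = x ^ ((1 + a) * k) := by
  rw [← rpow_natCast, ← rpow_add hx]
  ring_nf

lemma triadTerm_summable {l γ : ℝ} {u : ℕ → ℝ} (hfin : ∃ N : ℕ, ∀ n ≥ N, u n = 0) :
    Summable (triadTerm l γ u) := by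
  obtain ⟨N, hN⟩ := hfin
  refine summable_of_ne_finset_zero (s := Finset.range N) fun n hn => ?_
  simp [triadTerm, hN n (by simpa using hn)]

lemma tsum_triadTerm_eq_tsum_succ {l γ : ℝ} {u : ℕ → ℝ} (hu0 : u 0 = 0)
    (hfin : ∃ N : ℕ, ∀ n ≥ N, u n = 0) :
    ∑' n, triadTerm l γ u n = ∑' n, triadTerm l γ u (n + 1) := by
  rw [(triadTerm_summable hfin).tsum_eq_zero_add]
  simp [triadTerm, hu0]

lemma pairing_term_eq_triadTerm {l : ℝ} (hl : 0 < l) (γ : ℝ) (u : ℕ → ℝ) (n : ℕ) :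
    (-(l ^ (n + 1)) * u n ^ 2 + l ^ (n + 2) * u (n + 1) * u (n + 2)) *
        (l ^ ((2 * γ) * (n + 1 : ℕ)) * u (n + 1))
      = -(l ^ (2 * γ + 1) * triadTerm l γ u n - l * triadTerm l γ u (n + 1)) := by
  have hin : l ^ (n + 1) * l ^ ((2 * γ) * (n + 1 : ℕ))
      = l ^ (2 * γ + 1) * l ^ ((1 + 2 * γ) * n) := by
    rw [pow_mul_rpow_mul_natCast hl, ← rpow_add hl]
    push_cast
    ring_nf
  have hout : l ^ (n + 2) * l ^ ((2 * γ) * (n + 1 : ℕ))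
      = l * l ^ ((1 + 2 * γ) * (n + 1 : ℕ)) := by
    rw [pow_succ', mul_assoc, pow_mul_rpow_mul_natCast hl]
  simp only [triadTerm]
  linear_combination (u (n + 1) ^ 2 * u (n + 2)) * hout - (u n ^ 2 * u (n + 1)) * hin

theorem stmt1_general (l γ : ℝ) (hl : 1 < l) (u : ℕ → ℝ) (hu0 : u 0 = 0)
    (hfin : ∃ N : ℕ, ∀ n ≥ N, u n = 0) :
    -(∑' n : ℕ,
        (-(l ^ (n + 1)) * u n ^ 2 + l ^ (n + 2) * u (n + 1) * u (n + 2)) *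
          (l ^ ((2 * γ) * (n + 1 : ℕ)) * u (n + 1)))
      = (l ^ (2 * γ + 1) - l) *
        ∑' n : ℕ, l ^ ((1 + 2 * γ) * (n + 1 : ℕ)) * u (n + 1) ^ 2 * u (n + 2) := by
  have hsum := triadTerm_summable (l := l) (γ := γ) hfin
  simp_rw [pairing_term_eq_triadTerm (zero_lt_one.trans hl), tsum_neg, neg_neg]
  rw [(hsum.mul_left _).tsum_sub ((summable_nat_add_iff 1).2 hsum |>.mul_left _),
    tsum_mul_left, tsum_mul_left, tsum_triadTerm_eq_tsum_succ hu0 hfin, ← sub_mul]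
  rfl

/-- `-(B(u,u), A^{γ/α} u) = (λ^{2γ+1} - λ) Σ_{n≥1} λ^{(1+2γ)n} u_n² u_{n+1}`,
where `(B(u,u))_n = -λ^n u_{n-1}² + λ^{n+1} u_n u_{n+1}` and `(A^{γ/α}u)_n = λ^{2γn} u_n`,
for sequences with finitely many nonzero entries and `u_0 = 0`. -/
theorem stmt1 (l γ : ℝ) (hl : 1 < l) (hγ : 0 < γ) (u : ℕ → ℝ) (hu0 : u 0 = 0)
    (hfin : ∃ N : ℕ, ∀ n ≥ N, u n = 0) :
    -(∑' n : ℕ,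
        (-(l ^ (n + 1)) * u n ^ 2 + l ^ (n + 2) * u (n + 1) * u (n + 2)) *
          (l ^ ((2 * γ) * (n + 1 : ℕ)) * u (n + 1)))
      = (l ^ (2 * γ + 1) - l) *
        ∑' n : ℕ, l ^ ((1 + 2 * γ) * (n + 1 : ℕ)) * u (n + 1) ^ 2 * u (n + 2) :=
  stmt1_general l γ hl u hu0 hfin
end

section
/- Let 0 < α < 1/3 and 0 < γ < 1 − 3α. Then with A = √(λ^ε − 1) where ε = 2 − 6α − 2γ > 0, every real sequence u satisfies Σ_{n=1}^∞ λ^{(1+2γ)n} |u_n|³ ≥ A · (Σ_{n=1}^∞ λ^{2(α+γ)n} u_n²)^{3/2}, provided the left-hand side is finite. -/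
/-!
With `a n = λ^{(1+2γ)n}` and `b n = λ^{2(α+γ)n}`, Hölder's inequality with exponents `3/2` and `3`
applied to `a n ^ (2/3) * u n ^ 2` and `b n / a n ^ (2/3)` bounds `∑ b u²` by
`(∑ a |u|³)^{2/3} (∑ b³/a²)^{1/3}`. The weights are tuned so that `b³/a² = λ^{-εn}`, whose sum
is the geometric series `1/(λ^ε - 1) = A⁻²`.
-/

open Real

theorem tsum_mul_sq_le_rpow_mul_rpow {ι : Type*} {a b x : ι → ℝ} (ha : ∀ i, 0 < a i)
    (hb : ∀ i, 0 ≤ b i) (hax : Summable fun i => a i * |x i| ^ 3)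
    (hba : Summable fun i => b i ^ 3 / a i ^ 2) :
    ∑' i, b i * x i ^ 2 ≤
      (∑' i, a i * |x i| ^ 3) ^ ((2 : ℝ) / 3) * (∑' i, b i ^ 3 / a i ^ 2) ^ ((1 : ℝ) / 3) := by
  have ha' : ∀ i, 0 ≤ a i ^ ((2 : ℝ) / 3) := fun i => rpow_nonneg (ha i).le _
  set f : ι → ℝ := fun i => a i ^ ((2 : ℝ) / 3) * x i ^ 2
  set g : ι → ℝ := fun i => b i / a i ^ ((2 : ℝ) / 3)
  have hf_pow : ∀ i, f i ^ ((3 : ℝ) / 2) = a i * |x i| ^ 3 := fun i => by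
    rw [mul_rpow (ha' i) (sq_nonneg _), ← rpow_mul (ha i).le, ← sq_abs,
      ← rpow_natCast |x i|, ← rpow_mul (abs_nonneg _)]
    norm_num
  have hg_pow : ∀ i, g i ^ (3 : ℝ) = b i ^ 3 / a i ^ 2 := fun i => by
    rw [div_rpow (hb i) (ha' i), ← rpow_mul (ha i).le]
    norm_num
  have hfg : ∀ i, f i * g i = b i * x i ^ 2 := fun i => by
    have : a i ^ ((2 : ℝ) / 3) ≠ 0 := (rpow_pos_of_pos (ha i) _).ne'
    simp only [f, g]
    field_simp
  have hpq : ((3 : ℝ) / 2).HolderConjugate 3 := ⟨by norm_num, by norm_num, by norm_num⟩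
  have holder := inner_le_Lp_mul_Lq_tsum_of_nonneg (f := f) (g := g) hpq
    (fun i => mul_nonneg (ha' i) (sq_nonneg _)) (fun i => div_nonneg (hb i) (ha' i))
    (by simp only [hf_pow]; exact hax) (by simp only [hg_pow]; exact hba)
  simp only [hfg, hf_pow, hg_pow] at holder
  rwa [show (1 : ℝ) / (3 / 2) = 2 / 3 by norm_num] at holder

theorem rpow_three_halves_tsum_mul_sq_le {ι : Type*} {a b x : ι → ℝ} (ha : ∀ i, 0 < a i)
    (hb : ∀ i, 0 ≤ b i) (hax : Summable fun i => a i * |x i| ^ 3)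
    (hba : Summable fun i => b i ^ 3 / a i ^ 2) :
    (∑' i, b i * x i ^ 2) ^ ((3 : ℝ) / 2) ≤
      (∑' i, a i * |x i| ^ 3) * √(∑' i, b i ^ 3 / a i ^ 2) := by
  have hT : 0 ≤ ∑' i, a i * |x i| ^ 3 := tsum_nonneg fun i => by have := ha i; positivity
  have hG : 0 ≤ ∑' i, b i ^ 3 / a i ^ 2 := tsum_nonneg fun i => by have := hb i; positivity
  calc (∑' i, b i * x i ^ 2) ^ ((3 : ℝ) / 2)
      ≤ ((∑' i, a i * |x i| ^ 3) ^ ((2 : ℝ) / 3) *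
          (∑' i, b i ^ 3 / a i ^ 2) ^ ((1 : ℝ) / 3)) ^ ((3 : ℝ) / 2) :=
        rpow_le_rpow (tsum_nonneg fun i => mul_nonneg (hb i) (sq_nonneg _))
          (tsum_mul_sq_le_rpow_mul_rpow ha hb hax hba) (by norm_num)
    _ = (∑' i, a i * |x i| ^ 3) * √(∑' i, b i ^ 3 / a i ^ 2) := by
        rw [mul_rpow (by positivity) (by positivity), ← rpow_mul hT, ← rpow_mul hG, sqrt_eq_rpow]
        norm_num

theorem hasSum_rpow_neg_mul_succ {l ε : ℝ} (hl : 1 < l) (hε : 0 < ε) :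
    HasSum (fun n : ℕ => l ^ (-ε * (n + 1 : ℕ))) (l ^ ε - 1)⁻¹ := by
  have hl0 : 0 < l := one_pos.trans hl
  have hr : l ^ (-ε) < 1 := rpow_lt_one_of_one_lt_of_neg hl (neg_neg_of_pos hε)
  have hlε : 1 < l ^ ε := one_lt_rpow hl hε
  have hterm : ∀ n : ℕ, l ^ (-ε * (n + 1 : ℕ)) = (l ^ (-ε)) ^ n * l ^ (-ε) := fun n => by
    rw [← pow_succ, rpow_mul hl0.le, rpow_natCast]
  have hvalue : (1 - l ^ (-ε))⁻¹ * l ^ (-ε) = (l ^ ε - 1)⁻¹ := by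
    rw [rpow_neg hl0.le]
    field_simp
  simpa only [hterm, hvalue] using
    (hasSum_geometric_of_lt_one (rpow_nonneg hl0.le _) hr).mul_right (l ^ (-ε))

theorem stmt5_general (l α γ : ℝ) (hl : 1 < l)
    (hγ : γ < 1 - 3 * α) (u : ℕ → ℝ)
    (hsum : Summable (fun n : ℕ => l ^ ((1 + 2 * γ) * (n + 1 : ℕ)) * |u (n + 1)| ^ 3)) :
    Real.sqrt (l ^ (2 - 6 * α - 2 * γ) - 1) *
        (∑' n : ℕ, l ^ ((2 * (α + γ)) * (n + 1 : ℕ)) * u (n + 1) ^ 2) ^ ((3:ℝ)/2)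
      ≤ ∑' n : ℕ, l ^ ((1 + 2 * γ) * (n + 1 : ℕ)) * |u (n + 1)| ^ 3 := by
  have hl0 : 0 < l := one_pos.trans hl
  have hlε : 1 < l ^ (2 - 6 * α - 2 * γ) := one_lt_rpow hl (by linarith)
  have hweights : ∀ n : ℕ, (l ^ ((2 * (α + γ)) * (n + 1 : ℕ))) ^ 3 /
      (l ^ ((1 + 2 * γ) * (n + 1 : ℕ))) ^ 2 = l ^ (-(2 - 6 * α - 2 * γ) * (n + 1 : ℕ)) := by
    intro n
    rw [← rpow_natCast, ← rpow_natCast, ← rpow_mul hl0.le, ← rpow_mul hl0.le, ← rpow_sub hl0]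
    push_cast
    ring_nf
  have hgeom := hasSum_rpow_neg_mul_succ hl (by linarith : 0 < 2 - 6 * α - 2 * γ)
  simp only [← hweights] at hgeom
  calc √(l ^ (2 - 6 * α - 2 * γ) - 1) *
        (∑' n : ℕ, l ^ ((2 * (α + γ)) * (n + 1 : ℕ)) * u (n + 1) ^ 2) ^ ((3:ℝ)/2)
      ≤ √(l ^ (2 - 6 * α - 2 * γ) - 1) *
          ((∑' n : ℕ, l ^ ((1 + 2 * γ) * (n + 1 : ℕ)) * |u (n + 1)| ^ 3) *
            √(l ^ (2 - 6 * α - 2 * γ) - 1)⁻¹) := by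
        rw [← hgeom.tsum_eq]
        gcongr
        exact rpow_three_halves_tsum_mul_sq_le (fun n => by positivity) (fun n => by positivity)
          hsum hgeom.summable
    _ = ∑' n : ℕ, l ^ ((1 + 2 * γ) * (n + 1 : ℕ)) * |u (n + 1)| ^ 3 := by
        rw [sqrt_inv, mul_left_comm, mul_inv_cancel₀ (by positivity), mul_one]

/-- Inverted Sobolev-type estimate (Lemma `l:jensen`): for `0 < α < 1/3`,
`0 < γ < 1 - 3α`, `ε = 2 - 6α - 2γ`, `A = √(λ^ε - 1)`, one has
`Σ_{n≥1} λ^{(1+2γ)n}|u_n|³ ≥ A (Σ_{n≥1} λ^{2(α+γ)n} u_n²)^{3/2}`. -/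
theorem stmt5 (l α γ : ℝ) (hl : 1 < l) (hα0 : 0 < α) (hα : α < 1/3)
    (hγ0 : 0 < γ) (hγ : γ < 1 - 3 * α) (u : ℕ → ℝ)
    (hsum : Summable (fun n : ℕ => l ^ ((1 + 2 * γ) * (n + 1 : ℕ)) * |u (n + 1)| ^ 3)) :
    Real.sqrt (l ^ (2 - 6 * α - 2 * γ) - 1) *
        (∑' n : ℕ, l ^ ((2 * (α + γ)) * (n + 1 : ℕ)) * u (n + 1) ^ 2) ^ ((3:ℝ)/2)
      ≤ ∑' n : ℕ, l ^ ((1 + 2 * γ) * (n + 1 : ℕ)) * |u (n + 1)| ^ 3 :=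
  stmt5_general l α γ hl hγ u hsum
end

section
/- Positivity is preserved: if u = (u_n) is a solution of the dyadic system du_n/dt = −ν λ^{2αn} u_n + λ^n u_{n−1}² − λ^{n+1} u_n u_{n+1} + g_n on [0, T] with each u_n ∈ C¹, each g_n ≥ 0, and u_n(0) ≥ 0 for all n, then u_n(t) ≥ 0 for all n and all t ∈ [0, T]. -/
/-!
Along the `n`-th mode the equation is linear in `u_n`,
`u_n' = -A u_n + h` with `A = ν λ^{2αn} + λ^{n+1} u_{n+1}` continuous and
`h = λ^n u_{n-1}² + g_n ≥ 0`. Multiplying by the integrating factor `exp (∫₀ᵗ A)` gives a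
function with nonnegative derivative `exp (∫₀ᵗ A) · h`, hence monotone, so it stays above its
initial value `u_n(0) ≥ 0`.
-/

open Set

theorem ContinuousOn.hasDerivWithinAt_integral_Icc {A : ℝ → ℝ} {a b s : ℝ}
    (hA : ContinuousOn A (Icc a b)) (hs : s ∈ Icc a b) :
    HasDerivWithinAt (fun t => ∫ x in a..t, A x) (A s) (Icc a b) s := by
  have : Fact (s ∈ Icc a b) := ⟨hs⟩
  refine intervalIntegral.integral_hasDerivWithinAt_right ?_
    (hA.stronglyMeasurableAtFilter_nhdsWithin measurableSet_Icc s) (hA s hs)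
  exact (hA.mono (uIcc_subset_Icc ⟨le_rfl, hs.1.trans hs.2⟩ hs)).intervalIntegrable

theorem nonneg_of_hasDerivWithinAt_linear {f A h : ℝ → ℝ} {a b : ℝ}
    (hA : ContinuousOn A (Icc a b))
    (hf : ∀ t ∈ Icc a b, HasDerivWithinAt f (-A t * f t + h t) (Icc a b) t)
    (hh : ∀ t ∈ Icc a b, 0 ≤ h t) (ha : 0 ≤ f a) :
    ∀ t ∈ Icc a b, 0 ≤ f t := by
  intro t ht
  set Φ : ℝ → ℝ := fun s => ∫ x in a..s, A x
  set w : ℝ → ℝ := fun s => f s * Real.exp (Φ s)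
  have hw : ∀ s ∈ Icc a b, HasDerivWithinAt w (Real.exp (Φ s) * h s) (Icc a b) s :=
    fun s hs => ((hf s hs).mul (hA.hasDerivWithinAt_integral_Icc hs).exp).congr_deriv (by ring)
  have hmono : MonotoneOn w (Icc a b) :=
    monotoneOn_of_hasDerivWithinAt_nonneg (convex_Icc a b)
      (fun s hs => (hw s hs).continuousWithinAt)
      (fun s hs => (hw s (interior_subset hs)).mono interior_subset)
      (fun s hs => mul_nonneg (Real.exp_pos _).le (hh s (interior_subset hs)))
  have hwt : f a ≤ w t := by
    simpa [w, Φ] using hmono ⟨le_rfl, ht.1.trans ht.2⟩ ht ht.1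
  exact nonneg_of_mul_nonneg_left (ha.trans hwt) (Real.exp_pos _)

open Set in
theorem stmt10_general (l ν α T : ℝ) (hl : 1 < l)
    (g : ℕ → ℝ) (hg : ∀ n, 0 ≤ g n)
    (u : ℕ → ℝ → ℝ)
    (hode : ∀ n : ℕ, ∀ t ∈ Icc 0 T,
      HasDerivWithinAt (u (n + 1))
        (-ν * l ^ ((2 * α) * (n + 1 : ℕ)) * u (n + 1) t
          + l ^ ((n + 1 : ℕ) : ℝ) * (u n t) ^ 2
          - l ^ ((n + 2 : ℕ) : ℝ) * u (n + 1) t * u (n + 2) t + g (n + 1))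
        (Icc 0 T) t)
    (hinit : ∀ n : ℕ, 0 ≤ u (n + 1) 0) :
    ∀ n : ℕ, ∀ t ∈ Icc 0 T, 0 ≤ u (n + 1) t := by
  intro n
  have hnext : ContinuousOn (u (n + 2)) (Icc 0 T) :=
    fun t ht => (hode (n + 1) t ht).continuousWithinAt
  refine nonneg_of_hasDerivWithinAt_linear
    (A := fun t => ν * l ^ ((2 * α) * (n + 1 : ℕ)) + l ^ ((n + 2 : ℕ) : ℝ) * u (n + 2) t)
    (h := fun t => l ^ ((n + 1 : ℕ) : ℝ) * (u n t) ^ 2 + g (n + 1))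
    (continuousOn_const.add (continuousOn_const.mul hnext))
    (fun t ht => (hode n t ht).congr_deriv (by ring))
    (fun t _ => add_nonneg (mul_nonneg (Real.rpow_nonneg (by linarith) _) (sq_nonneg _))
      (hg _))
    (hinit n)

open Set in
/-- Positivity is preserved: if `u_n ∈ C¹([0,T])` solve
`u_n' = -ν λ^{2αn} u_n + λ^n u_{n-1}² - λ^{n+1} u_n u_{n+1} + g_n` (with `u_0 ≡ 0`),
`g_n ≥ 0`, and `u_n(0) ≥ 0` for all `n ≥ 1`, then `u_n(t) ≥ 0` on `[0,T]`. -/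
theorem stmt10 (l ν α T : ℝ) (hl : 1 < l) (hν : 0 < ν) (hα : 0 < α) (hT : 0 < T)
    (g : ℕ → ℝ) (hg : ∀ n, 0 ≤ g n)
    (u : ℕ → ℝ → ℝ) (hu0 : ∀ t, u 0 t = 0)
    (hC1 : ∀ n, ContDiffOn ℝ 1 (u n) (Icc 0 T))
    (hode : ∀ n : ℕ, ∀ t ∈ Icc 0 T,
      HasDerivWithinAt (u (n + 1))
        (-ν * l ^ ((2 * α) * (n + 1 : ℕ)) * u (n + 1) t
          + l ^ ((n + 1 : ℕ) : ℝ) * (u n t) ^ 2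
          - l ^ ((n + 2 : ℕ) : ℝ) * u (n + 1) t * u (n + 2) t + g (n + 1))
        (Icc 0 T) t)
    (hinit : ∀ n : ℕ, 0 ≤ u (n + 1) 0) :
    ∀ n : ℕ, ∀ t ∈ Icc 0 T, 0 ≤ u (n + 1) t :=
  stmt10_general l ν α T hl g hg u hode hinit
end

section
/- Energy equality for α ≥ 1/2: if u is a solution of the dyadic model with α ≥ 1/2, u_n(t) bounded uniformly by R on [t₀, t], and ∫_{t₀}^t ‖u(τ)‖² dτ < ∞ where ‖u‖² = Σ_n λ^{2αn} u_n², then the boundary flux vanishes: ∫_{t₀}^t λ^{N+1} u_N(τ)² u_{N+1}(τ) dτ → 0 as N → ∞, and consequently |u(t)|² + 2ν ∫_{t₀}^t ‖u(τ)‖² dτ = |u(t₀)|² + 2∫_{t₀}^t (g, u(τ)) dτ. -/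
/-!
Multiplying the equation of mode `n` by `2 uₙ`, the nonlinear terms telescope, so the energy
of the first `N` modes obeys an exact balance whose only error term is the boundary flux
`∫ λ^{N+1} u_N² u_{N+1}`. For `α ≥ 1/2` and `|u_{N+1}| ≤ R` this flux is at most
`λ R ∫ λ^{2αN} u_N²`, the `N`-th term of the convergent series `∫ ‖u‖² = ∑ₙ ∫ λ^{2αn} uₙ²`,
so it tends to `0`; letting `N → ∞` in the balance gives the energy equality.
-/

open Set Filter Topology MeasureTheory Finset
open scoped Interval

lemma hasSum_intervalIntegral_of_nonneg {f : ℕ → ℝ → ℝ} {a b : ℝ}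
    (hf : ∀ n, IntervalIntegrable (f n) volume a b) (hf_nonneg : ∀ n, ∀ x ∈ Ι a b, 0 ≤ f n x)
    (hsum : ∀ x ∈ Ι a b, Summable (f · x))
    (hint : IntervalIntegrable (fun x => ∑' n, f n x) volume a b) :
    HasSum (fun n => ∫ x in a..b, f n x) (∫ x in a..b, ∑' n, f n x) :=
  intervalIntegral.hasSum_integral_of_dominated_convergence f
    (fun n => (intervalIntegrable_iff.mp (hf n)).aestronglyMeasurable)
    (fun n => ae_of_all _ fun x hx => (Real.norm_of_nonneg (hf_nonneg n x hx)).le)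
    (ae_of_all _ hsum) hint (ae_of_all _ fun x hx => (hsum x hx).hasSum)

lemma tendsto_sum_range_intervalIntegral {f : ℕ → ℝ → ℝ} {a b C : ℝ}
    (hf : ∀ n, IntervalIntegrable (f n) volume a b) (hsum : ∀ x ∈ Ι a b, Summable (f · x))
    (hbound : ∀ N, ∀ x ∈ Ι a b, |∑ n ∈ range N, f n x| ≤ C) :
    Tendsto (fun N => ∑ n ∈ range N, ∫ x in a..b, f n x) atTop
      (𝓝 (∫ x in a..b, ∑' n, f n x)) := by
  simp_rw [← intervalIntegral.integral_finsetSum fun n _ => hf n]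
  refine intervalIntegral.tendsto_integral_filter_of_dominated_convergence (fun _ => C)
    (Eventually.of_forall fun N => ?_)
    (Eventually.of_forall fun N => ae_of_all _ (hbound N)) intervalIntegrable_const
    (ae_of_all _ fun x hx => (hsum x hx).hasSum.tendsto_sum_nat)
  rw [← sum_fn]
  exact (intervalIntegrable_iff.mp (IntervalIntegrable.sum _ fun n _ => hf n)).aestronglyMeasurable

lemma abs_mul_le_half_add_sq (x y : ℝ) : |x * y| ≤ (x ^ 2 + y ^ 2) / 2 := by
  rw [abs_mul, ← sq_abs x, ← sq_abs y]
  linarith [two_mul_le_add_sq |x| |y|]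

lemma abs_sum_range_mul_le {a b : ℕ → ℝ} (ha : Summable (a · ^ 2)) (hb : Summable (b · ^ 2))
    (N : ℕ) : |∑ n ∈ range N, a n * b n| ≤ ((∑' n, a n ^ 2) + ∑' n, b n ^ 2) / 2 := by
  have hab : Summable fun n => (a n ^ 2 + b n ^ 2) / 2 := (ha.add hb).div_const 2
  calc |∑ n ∈ range N, a n * b n| ≤ ∑ n ∈ range N, |a n * b n| := abs_sum_le_sum_abs _ _
    _ ≤ ∑ n ∈ range N, (a n ^ 2 + b n ^ 2) / 2 :=
      sum_le_sum fun n _ => abs_mul_le_half_add_sq _ _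
    _ ≤ ∑' n, (a n ^ 2 + b n ^ 2) / 2 :=
      hab.sum_le_tsum _ fun _ _ => by positivity
    _ = ((∑' n, a n ^ 2) + ∑' n, b n ^ 2) / 2 := by rw [tsum_div_const, ha.tsum_add hb]

lemma summable_mul_of_summable_sq {a b : ℕ → ℝ} (ha : Summable (a · ^ 2))
    (hb : Summable (b · ^ 2)) : Summable fun n => a n * b n :=
  Summable.of_norm_bounded ((ha.add hb).div_const 2) fun _ => abs_mul_le_half_add_sq _ _

lemma abs_le_of_tsum_sq_le {a : ℕ → ℝ} {R : ℝ} (ha : Summable (a · ^ 2))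
    (hR : ∑' n, a n ^ 2 ≤ R ^ 2) (n : ℕ) : |a n| ≤ |R| :=
  sq_le_sq.mp ((ha.le_tsum n fun m _ => sq_nonneg (a m)).trans hR)

lemma rpow_natCast_succ_le_mul_rpow {l α : ℝ} (hl : 1 ≤ l) (hα : 1 / 2 ≤ α) (k : ℕ) :
    l ^ ((k + 1 : ℕ) : ℝ) ≤ l * l ^ ((2 * α) * k) := by
  rw [Nat.cast_succ, Real.rpow_add_one (by linarith), mul_comm]
  gcongr
  nlinarith [k.cast_nonneg (α := ℝ)]

section DyadicModel

variable {l ν α : ℝ} {g : ℕ → ℝ} {u : ℕ → ℝ → ℝ} {s : Set ℝ}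

/-- The modes are `u (n + 1)`; `u 0` stands for the boundary mode `u₀ ≡ 0`. -/
def DyadicODE (l ν α : ℝ) (g : ℕ → ℝ) (u : ℕ → ℝ → ℝ) (s : Set ℝ) : Prop :=
  ∀ n : ℕ, ∀ τ ∈ s,
      HasDerivAt (u (n + 1))
        (-ν * l ^ ((2 * α) * (n + 1 : ℕ)) * u (n + 1) τ
          + l ^ ((n + 1 : ℕ) : ℝ) * (u n τ) ^ 2
          - l ^ ((n + 2 : ℕ) : ℝ) * u (n + 1) τ * u (n + 2) τ + g (n + 1)) τ

/-- The energy flux from mode `n` into mode `n + 1`. -/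
noncomputable def flux (l : ℝ) (u : ℕ → ℝ → ℝ) (n : ℕ) (τ : ℝ) : ℝ :=
  l ^ ((n + 1 : ℕ) : ℝ) * u n τ ^ 2 * u (n + 1) τ

lemma abs_flux_succ_le (hl : 1 ≤ l) (hα : 1 / 2 ≤ α) {N : ℕ} {τ R : ℝ}
    (hR : |u (N + 2) τ| ≤ R) :
    |flux l u (N + 1) τ| ≤ l * R * (l ^ ((2 * α) * (N + 1 : ℕ)) * u (N + 1) τ ^ 2) := by
  have hl0 : 0 ≤ l := by linarith
  rw [flux, abs_mul, abs_mul, abs_of_nonneg (Real.rpow_nonneg hl0 _), abs_sq]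
  calc l ^ ((N + 1 + 1 : ℕ) : ℝ) * u (N + 1) τ ^ 2 * |u (N + 1 + 1) τ|
      ≤ l * l ^ ((2 * α) * (N + 1 : ℕ)) * u (N + 1) τ ^ 2 * R := by
        gcongr
        exact rpow_natCast_succ_le_mul_rpow hl hα _
    _ = _ := by ring

namespace DyadicODE

lemma continuousOn_succ (hode : DyadicODE l ν α g u s) (n : ℕ) : ContinuousOn (u (n + 1)) s :=
  fun τ hτ => (hode n τ hτ).continuousAt.continuousWithinAt

lemma hasDerivAt_sq (hode : DyadicODE l ν α g u s) (n : ℕ) {τ : ℝ} (hτ : τ ∈ s) :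
    HasDerivAt (fun σ => u (n + 1) σ ^ 2)
      (-(2 * ν) * (l ^ ((2 * α) * (n + 1 : ℕ)) * u (n + 1) τ ^ 2)
        + 2 * (g (n + 1) * u (n + 1) τ) + 2 * (flux l u n τ - flux l u (n + 1) τ)) τ := by
  have hflux_succ : flux l u (n + 1) τ = l ^ ((n + 2 : ℕ) : ℝ) * u (n + 1) τ ^ 2 * u (n + 2) τ :=
    rfl
  refine ((hode n τ hτ).fun_pow 2).congr_deriv ?_
  rw [hflux_succ, flux]
  ring

lemma continuousOn (hode : DyadicODE l ν α g u s) (hu0 : ∀ σ, u 0 σ = 0) :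
    ∀ n, ContinuousOn (u n) s
  | 0 => (funext hu0 : u 0 = fun _ => 0) ▸ continuousOn_const
  | n + 1 => hode.continuousOn_succ n

variable {t₀ t : ℝ}

lemma sq_sub_sq_eq (hode : DyadicODE l ν α g u (Icc t₀ t)) (hu0 : ∀ σ, u 0 σ = 0)
    (ht : t₀ ≤ t) (n : ℕ) :
    u (n + 1) t ^ 2 - u (n + 1) t₀ ^ 2
      = -(2 * ν) * (∫ τ in t₀..t, l ^ ((2 * α) * (n + 1 : ℕ)) * u (n + 1) τ ^ 2)
        + 2 * (∫ τ in t₀..t, g (n + 1) * u (n + 1) τ)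
        + 2 * ((∫ τ in t₀..t, flux l u n τ) - ∫ τ in t₀..t, flux l u (n + 1) τ) := by
  have hu := hode.continuousOn hu0
  have hint {f : ℝ → ℝ} (hf : ContinuousOn f (Icc t₀ t)) : IntervalIntegrable f volume t₀ t :=
    hf.intervalIntegrable_of_Icc ht
  have hd : IntervalIntegrable
      (fun τ => -(2 * ν) * (l ^ ((2 * α) * (n + 1 : ℕ)) * u (n + 1) τ ^ 2)) volume t₀ t :=
    hint (continuousOn_const.mul (continuousOn_const.mul ((hu (n + 1)).pow 2)))
  have hw : IntervalIntegrable (fun τ => 2 * (g (n + 1) * u (n + 1) τ)) volume t₀ t :=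
    hint (continuousOn_const.mul (continuousOn_const.mul (hu (n + 1))))
  have hflux (k : ℕ) : IntervalIntegrable (flux l u k) volume t₀ t :=
    hint ((continuousOn_const.mul ((hu k).pow 2)).mul (hu (k + 1)))
  have hftc := intervalIntegral.integral_eq_sub_of_hasDerivAt
    (fun τ hτ => hode.hasDerivAt_sq n (uIcc_of_le ht ▸ hτ))
    ((hd.add hw).add (((hflux n).sub (hflux (n + 1))).const_mul 2))
  rw [intervalIntegral.integral_add (hd.add hw) (((hflux n).sub (hflux (n + 1))).const_mul 2),
    intervalIntegral.integral_add hd hw] at hftc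
  simp only [intervalIntegral.integral_const_mul] at hftc ⊢
  rw [intervalIntegral.integral_sub (hflux n) (hflux (n + 1))] at hftc
  exact hftc.symm

lemma partialEnergy_eq (hode : DyadicODE l ν α g u (Icc t₀ t)) (hu0 : ∀ σ, u 0 σ = 0)
    (ht : t₀ ≤ t) (N : ℕ) :
    ∑ n ∈ range N, u (n + 1) t ^ 2
        + 2 * ν * ∑ n ∈ range N, ∫ τ in t₀..t, l ^ ((2 * α) * (n + 1 : ℕ)) * u (n + 1) τ ^ 2
      = ∑ n ∈ range N, u (n + 1) t₀ ^ 2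
        + 2 * (∑ n ∈ range N, ∫ τ in t₀..t, g (n + 1) * u (n + 1) τ)
        - 2 * ∫ τ in t₀..t, flux l u N τ := by
  induction N with
  | zero => simp [flux, hu0]
  | succ N ih =>
    simp only [sum_range_succ]
    linear_combination ih + hode.sq_sub_sq_eq hu0 ht N

lemma hasSum_integral_dissipation (hode : DyadicODE l ν α g u (Icc t₀ t)) (hl : 0 ≤ l)
    (ht : t₀ ≤ t)
    (hsum : ∀ τ ∈ Icc t₀ t, Summable fun n : ℕ => l ^ ((2 * α) * (n + 1 : ℕ)) * u (n + 1) τ ^ 2)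
    (hint : IntervalIntegrable
      (fun τ => ∑' n : ℕ, l ^ ((2 * α) * (n + 1 : ℕ)) * u (n + 1) τ ^ 2) volume t₀ t) :
    HasSum (fun n => ∫ τ in t₀..t, l ^ ((2 * α) * (n + 1 : ℕ)) * u (n + 1) τ ^ 2)
      (∫ τ in t₀..t, ∑' n : ℕ, l ^ ((2 * α) * (n + 1 : ℕ)) * u (n + 1) τ ^ 2) :=
  have hsub : Ι t₀ t ⊆ Icc t₀ t := uIoc_of_le ht ▸ Ioc_subset_Icc_self
  hasSum_intervalIntegral_of_nonneg
    (fun n => (continuousOn_const.mul ((hode.continuousOn_succ n).pow 2)).intervalIntegrable_of_Icc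
      ht)
    (fun _ _ _ => mul_nonneg (Real.rpow_nonneg hl _) (sq_nonneg _))
    (fun τ hτ => hsum τ (hsub hτ)) hint

lemma tendsto_sum_integral_forcing (hode : DyadicODE l ν α g u (Icc t₀ t)) (ht : t₀ ≤ t)
    {R : ℝ} (hg : Summable fun n => g (n + 1) ^ 2)
    (hl2 : ∀ τ ∈ Icc t₀ t, Summable fun n => u (n + 1) τ ^ 2)
    (hbound : ∀ τ ∈ Icc t₀ t, ∑' n, u (n + 1) τ ^ 2 ≤ R ^ 2) :
    Tendsto (fun N => ∑ n ∈ range N, ∫ τ in t₀..t, g (n + 1) * u (n + 1) τ) atTop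
      (𝓝 (∫ τ in t₀..t, ∑' n, g (n + 1) * u (n + 1) τ)) :=
  have hsub : Ι t₀ t ⊆ Icc t₀ t := uIoc_of_le ht ▸ Ioc_subset_Icc_self
  tendsto_sum_range_intervalIntegral (C := ((∑' n, g (n + 1) ^ 2) + R ^ 2) / 2)
    (fun n => (continuousOn_const.mul (hode.continuousOn_succ n)).intervalIntegrable_of_Icc ht)
    (fun τ hτ => summable_mul_of_summable_sq hg (hl2 τ (hsub hτ)))
    (fun N τ hτ => (abs_sum_range_mul_le hg (hl2 τ (hsub hτ)) N).trans
      (by linarith [hbound τ (hsub hτ)]))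

lemma tendsto_integral_flux (hode : DyadicODE l ν α g u (Icc t₀ t)) (hl : 1 ≤ l)
    (hα : 1 / 2 ≤ α) (ht : t₀ ≤ t) {R : ℝ} (hR : ∀ n, ∀ τ ∈ Icc t₀ t, |u (n + 1) τ| ≤ R)
    (hdiss : Tendsto (fun n => ∫ τ in t₀..t, l ^ ((2 * α) * (n + 1 : ℕ)) * u (n + 1) τ ^ 2)
      atTop (𝓝 0)) :
    Tendsto (fun N => ∫ τ in t₀..t, flux l u N τ) atTop (𝓝 0) := by
  rw [← tendsto_add_atTop_iff_nat 1]
  refine squeeze_zero_norm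
    (a := fun N => l * R * ∫ τ in t₀..t, l ^ ((2 * α) * (N + 1 : ℕ)) * u (N + 1) τ ^ 2)
    (fun N => ?_) (by simpa only [mul_zero] using hdiss.const_mul (l * R))
  rw [← intervalIntegral.integral_const_mul]
  refine intervalIntegral.norm_integral_le_of_norm_le ht (ae_of_all volume fun τ hτ => ?_)
    (((continuousOn_const.mul ((hode.continuousOn_succ N).pow 2)).intervalIntegrable_of_Icc
      ht).const_mul _)
  exact abs_flux_succ_le hl hα (hR (N + 1) τ (Ioc_subset_Icc_self hτ))

end DyadicODE

end DyadicModel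

open Set in
theorem stmt16_general (l ν α t₀ t R : ℝ) (hl : 1 < l) (hα : 1/2 ≤ α)
    (ht : t₀ ≤ t)
    (g : ℕ → ℝ) (hgl2 : Summable (fun n => g n ^ 2))
    (u : ℕ → ℝ → ℝ) (hu0 : ∀ s, u 0 s = 0)
    (hode : ∀ n : ℕ, ∀ τ ∈ Icc t₀ t,
      HasDerivAt (u (n + 1))
        (-ν * l ^ ((2 * α) * (n + 1 : ℕ)) * u (n + 1) τ
          + l ^ ((n + 1 : ℕ) : ℝ) * (u n τ) ^ 2
          - l ^ ((n + 2 : ℕ) : ℝ) * u (n + 1) τ * u (n + 2) τ + g (n + 1)) τ)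
    (hl2 : ∀ τ ∈ Icc t₀ t, Summable (fun n : ℕ => u (n + 1) τ ^ 2))
    (hbound : ∀ τ ∈ Icc t₀ t, (∑' n : ℕ, u (n + 1) τ ^ 2) ≤ R ^ 2)
    (hVsummable : ∀ τ ∈ Icc t₀ t,
      Summable (fun n : ℕ => l ^ ((2 * α) * (n + 1 : ℕ)) * u (n + 1) τ ^ 2))
    (hVint : IntervalIntegrable
      (fun τ => ∑' n : ℕ, l ^ ((2 * α) * (n + 1 : ℕ)) * u (n + 1) τ ^ 2)
      MeasureTheory.volume t₀ t) :
    Filter.Tendsto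
        (fun N : ℕ => ∫ τ in t₀..t, l ^ ((N + 2 : ℕ) : ℝ) * u (N + 1) τ ^ 2 * u (N + 2) τ)
        Filter.atTop (nhds 0)
      ∧ (∑' n : ℕ, u (n + 1) t ^ 2)
          + 2 * ν * (∫ τ in t₀..t, ∑' n : ℕ, l ^ ((2 * α) * (n + 1 : ℕ)) * u (n + 1) τ ^ 2)
        = (∑' n : ℕ, u (n + 1) t₀ ^ 2)
          + 2 * ∫ τ in t₀..t, ∑' n : ℕ, g (n + 1) * u (n + 1) τ := by
  have hdiss := DyadicODE.hasSum_integral_dissipation hode (by linarith) ht hVsummable hVint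
  have hwork := DyadicODE.tendsto_sum_integral_forcing hode ht
    ((summable_nat_add_iff 1).mpr hgl2) hl2 hbound
  have hflux := DyadicODE.tendsto_integral_flux hode hl.le hα ht
    (fun n τ hτ => abs_le_of_tsum_sq_le (hl2 τ hτ) (hbound τ hτ) n)
    hdiss.summable.tendsto_atTop_zero
  have henergy (σ : ℝ) (hσ : σ ∈ Icc t₀ t) :
      Tendsto (fun N => ∑ n ∈ range N, u (n + 1) σ ^ 2) atTop (𝓝 (∑' n, u (n + 1) σ ^ 2)) :=
    (hl2 σ hσ).hasSum.tendsto_sum_nat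
  refine ⟨(tendsto_add_atTop_iff_nat 1).mpr hflux, tendsto_nhds_unique
    ((henergy t (right_mem_Icc.mpr ht)).add (hdiss.tendsto_sum_nat.const_mul (2 * ν))) ?_⟩
  have hlim := ((henergy t₀ (left_mem_Icc.mpr ht)).add (hwork.const_mul 2)).sub
    (hflux.const_mul 2)
  rw [mul_zero, sub_zero] at hlim
  exact hlim.congr fun N => (DyadicODE.partialEnergy_eq hode hu0 ht N).symm

open Set in
/-- Energy equality for `α ≥ 1/2`: for a solution of the dyadic model bounded by `R`
in `ℓ²` on `[t₀,t]` with `∫_{t₀}^t ‖u‖² dτ < ∞`, the boundary flux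
`∫_{t₀}^t λ^{N+1} u_N² u_{N+1} dτ → 0` as `N → ∞`, and the energy equality
`|u(t)|² + 2ν ∫_{t₀}^t ‖u‖² dτ = |u(t₀)|² + 2 ∫_{t₀}^t (g,u) dτ` holds. -/
theorem stmt16 (l ν α t₀ t R : ℝ) (hl : 1 < l) (hν : 0 < ν) (hα : 1/2 ≤ α)
    (ht : t₀ ≤ t) (hR : 0 ≤ R)
    (g : ℕ → ℝ) (hg : ∀ n, 0 ≤ g n) (hgl2 : Summable (fun n => g n ^ 2))
    (u : ℕ → ℝ → ℝ) (hu0 : ∀ s, u 0 s = 0)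
    (hode : ∀ n : ℕ, ∀ τ ∈ Icc t₀ t,
      HasDerivAt (u (n + 1))
        (-ν * l ^ ((2 * α) * (n + 1 : ℕ)) * u (n + 1) τ
          + l ^ ((n + 1 : ℕ) : ℝ) * (u n τ) ^ 2
          - l ^ ((n + 2 : ℕ) : ℝ) * u (n + 1) τ * u (n + 2) τ + g (n + 1)) τ)
    (hl2 : ∀ τ ∈ Icc t₀ t, Summable (fun n : ℕ => u (n + 1) τ ^ 2))
    (hbound : ∀ τ ∈ Icc t₀ t, (∑' n : ℕ, u (n + 1) τ ^ 2) ≤ R ^ 2)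
    (hVsummable : ∀ τ ∈ Icc t₀ t,
      Summable (fun n : ℕ => l ^ ((2 * α) * (n + 1 : ℕ)) * u (n + 1) τ ^ 2))
    (hVint : IntervalIntegrable
      (fun τ => ∑' n : ℕ, l ^ ((2 * α) * (n + 1 : ℕ)) * u (n + 1) τ ^ 2)
      MeasureTheory.volume t₀ t) :
    Filter.Tendsto
        (fun N : ℕ => ∫ τ in t₀..t, l ^ ((N + 2 : ℕ) : ℝ) * u (N + 1) τ ^ 2 * u (N + 2) τ)
        Filter.atTop (nhds 0)
      ∧ (∑' n : ℕ, u (n + 1) t ^ 2)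
          + 2 * ν * (∫ τ in t₀..t, ∑' n : ℕ, l ^ ((2 * α) * (n + 1 : ℕ)) * u (n + 1) τ ^ 2)
        = (∑' n : ℕ, u (n + 1) t₀ ^ 2)
          + 2 * ∫ τ in t₀..t, ∑' n : ℕ, g (n + 1) * u (n + 1) τ :=
  stmt16_general l ν α t₀ t R hl hα ht g hgl2 u hu0 hode hl2 hbound hVsummable hVint
end

section
/- Continuity of the cross-term series: let u_n : [0, ∞) → ℝ be continuous functions, γ > 0, λ > 1, and suppose t ↦ Σ_{n=1}^∞ λ^{2γn} u_n(t)² is finite and continuous on [0, ∞). Then t ↦ Σ_{n=1}^∞ λ^{2γn} u_n(t) u_{n+1}(t) is continuous on [0, ∞). -/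
/-!
The partial sums of a series of nonnegative continuous functions with continuous sum increase
to that sum, so by Dini's theorem they converge locally uniformly. A series whose terms are
dominated in norm by such a series has its tails dominated by the tails of the majorant, hence
also converges locally uniformly, and its sum is continuous. The cross terms are dominated by
`λ^{2γn} u_n² + λ^{2γ(n+1)} u_{n+1}²` since `λ^{2γn}` increases with `n`, and the sum of this
majorant is `2φ - λ^{2γ} u_1²`.
-/

open Set Filter Topology

theorem TendstoLocallyUniformlyOn.of_dist_le {ι X Y Z : Type*} [TopologicalSpace X]
    [PseudoMetricSpace Y] [PseudoMetricSpace Z] {p : Filter ι} {s : Set X}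
    {F : ι → X → Y} {f : X → Y} {G : ι → X → Z} {g : X → Z}
    (h : TendstoLocallyUniformlyOn F f p s)
    (hle : ∀ n, ∀ x ∈ s, dist (g x) (G n x) ≤ dist (f x) (F n x)) :
    TendstoLocallyUniformlyOn G g p s := by
  rw [Metric.tendstoLocallyUniformlyOn_iff] at h ⊢
  intro ε hε x hx
  obtain ⟨t, ht, hFt⟩ := h ε hε x hx
  exact ⟨t ∩ s, inter_mem ht self_mem_nhdsWithin,
    hFt.mono fun n hn y hy => (hle n y hy.2).trans_lt (hn y hy.1)⟩

theorem norm_tsum_sub_sum_range_le {E : Type*} [NormedAddCommGroup E] [CompleteSpace E]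
    {f : ℕ → E} {b : ℕ → ℝ} (hb : Summable b) (hfb : ∀ n, ‖f n‖ ≤ b n) (N : ℕ) :
    ‖∑' n, f n - ∑ n ∈ Finset.range N, f n‖ ≤ ∑' n, b n - ∑ n ∈ Finset.range N, b n := by
  have hf : Summable f := hb.of_norm_bounded hfb
  rw [← (hf.sum_add_tsum_nat_add N), add_sub_cancel_left]
  exact tsum_of_norm_bounded ((hasSum_nat_add_iff' N).2 hb.hasSum) fun n => hfb (n + N)

section SeriesOfFunctions

variable {X : Type*} [TopologicalSpace X] {s : Set X}

theorem tendstoLocallyUniformlyOn_sum_range_of_nonneg {b : ℕ → X → ℝ}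
    (hb_cont : ∀ n, ContinuousOn (b n) s) (hb_nonneg : ∀ n, ∀ x ∈ s, 0 ≤ b n x)
    (hb_sum : ∀ x ∈ s, Summable (b · x)) (hφ : ContinuousOn (fun x => ∑' n, b n x) s) :
    TendstoLocallyUniformlyOn (fun N x => ∑ n ∈ Finset.range N, b n x) (fun x => ∑' n, b n x)
      atTop s :=
  Monotone.tendstoLocallyUniformlyOn_of_forall_tendsto
    (fun N => continuousOn_finsetSum _ fun n _ => hb_cont n)
    (fun x hx => monotone_nat_of_le_succ fun N => by
      simpa [Finset.sum_range_succ] using hb_nonneg N x hx)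
    hφ (fun x hx => (hb_sum x hx).hasSum.tendsto_sum_nat)

theorem continuousOn_tsum_of_norm_le {E : Type*} [NormedAddCommGroup E] [CompleteSpace E]
    {g : ℕ → X → E} {b : ℕ → X → ℝ}
    (hg : ∀ n, ContinuousOn (g n) s) (hb_cont : ∀ n, ContinuousOn (b n) s)
    (hgb : ∀ n, ∀ x ∈ s, ‖g n x‖ ≤ b n x)
    (hb_sum : ∀ x ∈ s, Summable (b · x)) (hφ : ContinuousOn (fun x => ∑' n, b n x) s) :
    ContinuousOn (fun x => ∑' n, g n x) s := by
  have hb_lim := tendstoLocallyUniformlyOn_sum_range_of_nonneg hb_cont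
    (fun n x hx => (norm_nonneg _).trans (hgb n x hx)) hb_sum hφ
  refine (hb_lim.of_dist_le (G := fun N x => ∑ n ∈ Finset.range N, g n x)
    (g := fun x => ∑' n, g n x) fun N x hx => ?_).continuousOn
    (Frequently.of_forall fun N => continuousOn_finsetSum _ fun n _ => hg n)
  rw [dist_eq_norm, Real.dist_eq]
  exact (norm_tsum_sub_sum_range_le (hb_sum x hx) (hgb · x hx) N).trans (le_abs_self _)

end SeriesOfFunctions

theorem abs_mul_mul_le_mul_sq_add_mul_sq {L L' a c : ℝ} (hL : 0 ≤ L) (hLL' : L ≤ L') :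
    |L * a * c| ≤ L * a ^ 2 + L' * c ^ 2 := by
  have hac : |a * c| ≤ a ^ 2 + c ^ 2 := by
    rw [abs_mul, ← sq_abs a, ← sq_abs c]
    nlinarith [sq_nonneg (|a| - |c|), abs_nonneg a, abs_nonneg c]
  rw [mul_assoc, abs_mul, abs_of_nonneg hL]
  nlinarith [mul_le_mul_of_nonneg_left hac hL, mul_le_mul_of_nonneg_right hLL' (sq_nonneg c)]

open Set in
/-- Continuity of the cross-term series (Lemma `l:contnnp1`): if each `u_n` is
continuous and `t ↦ Σ_{n≥1} λ^{2γn} u_n(t)²` is finite and continuous on `[0,∞)`,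
then `t ↦ Σ_{n≥1} λ^{2γn} u_n(t) u_{n+1}(t)` is continuous on `[0,∞)`. -/
theorem stmt18 (l γ : ℝ) (hl : 1 < l) (hγ : 0 < γ) (u : ℕ → ℝ → ℝ)
    (hcont : ∀ n, Continuous (u n))
    (hsum : ∀ t ∈ Ici (0:ℝ),
      Summable (fun n : ℕ => l ^ ((2 * γ) * (n + 1 : ℕ)) * u (n + 1) t ^ 2))
    (hφ : ContinuousOn
      (fun t => ∑' n : ℕ, l ^ ((2 * γ) * (n + 1 : ℕ)) * u (n + 1) t ^ 2) (Ici 0)) :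
    ContinuousOn
      (fun t => ∑' n : ℕ, l ^ ((2 * γ) * (n + 1 : ℕ)) * u (n + 1) t * u (n + 2) t)
      (Ici 0) := by
  set w : ℕ → ℝ := fun n => l ^ ((2 * γ) * (n + 1 : ℕ))
  set b : ℕ → ℝ → ℝ := fun n t => w n * u (n + 1) t ^ 2
  have hw_nonneg (n : ℕ) : 0 ≤ w n := Real.rpow_nonneg (by linarith) _
  have hw_mono (n : ℕ) : w n ≤ w (n + 1) :=
    Real.rpow_le_rpow_of_exponent_le hl.le (by push_cast; nlinarith)
  have hb_cont (n : ℕ) : ContinuousOn (fun t => b n t + b (n + 1) t) (Ici 0) :=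
    Continuous.continuousOn (by fun_prop)
  have hb_sum (t : ℝ) (ht : t ∈ Ici 0) : Summable (b · t) := hsum t ht
  have hb_shift_sum (t : ℝ) (ht : t ∈ Ici 0) : Summable fun n => b n t + b (n + 1) t :=
    (hb_sum t ht).add ((summable_nat_add_iff 1).2 (hb_sum t ht))
  have hb_tsum : EqOn (fun t => 2 * ∑' n, b n t - b 0 t)
      (fun t => ∑' n, (b n t + b (n + 1) t)) (Ici 0) := fun t ht => by
    dsimp only
    rw [(hb_sum t ht).tsum_add ((summable_nat_add_iff 1).2 (hb_sum t ht)),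
      (hb_sum t ht).tsum_eq_zero_add]
    ring
  refine continuousOn_tsum_of_norm_le (fun n => Continuous.continuousOn (by fun_prop)) hb_cont
    (fun n t _ => abs_mul_mul_le_mul_sq_add_mul_sq (hw_nonneg n) (hw_mono n)) hb_shift_sum ?_
  exact ((continuousOn_const.mul hφ).sub (Continuous.continuousOn (by fun_prop))).congr
    hb_tsum.symm
end

section
/- Local Riccati bound implies no integrable blow-up for α ≥ 1/2: if y : [0, t*) → [0, ∞) is continuous, ∫_0^{t*} y(τ) dτ < ∞, and y(t) → ∞ as t → t*−, then y cannot satisfy the differential inequality y'(t) ≤ a y(t)² + b (with constants a, b > 0) on (0, t*); equivalently, any continuous solution of y' ≤ a y² + b that is locally integrable on [0, t*] stays bounded on [0, t*]. -/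
/-!
Once `y ≥ 1` near `t*`, the inequality becomes `y' ≤ c y²` with `c = |a| + |b|`, so
`t ↦ 1 / y t + c t` is nondecreasing; letting `t → t*` (where `1 / y → 0`) gives
`1 / y s ≤ c (t* - s)`. Thus `y s ≥ 1 / (c (t* - s))`, which is not integrable up to `t*`.
-/

open Set Filter Topology MeasureTheory

theorem not_integrableOn_Ico_inv_sub {l T : ℝ} (hlT : l < T) :
    ¬ IntegrableOn (fun s => (T - s)⁻¹) (Ico l T) := by
  intro h
  have hII : IntervalIntegrable (fun s => (s - T)⁻¹) volume l T := by
    rw [intervalIntegrable_iff_integrableOn_Ioc_of_le hlT.le,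
      integrableOn_Ioc_iff_integrableOn_Ioo]
    refine (h.mono_set Ioo_subset_Ico_self).neg.congr_fun (fun s _ => ?_) measurableSet_Ioo
    rw [Pi.neg_apply, ← inv_neg, neg_sub]
  rw [intervalIntegrable_sub_inv_iff] at hII
  rcases hII with h | h
  · exact hlT.ne h
  · exact h right_mem_uIcc

theorem MonotoneOn.le_of_tendsto_nhdsLT {g : ℝ → ℝ} {l T L : ℝ} (hg : MonotoneOn g (Ico l T))
    (hlim : Tendsto g (𝓝[<] T) (𝓝 L)) {s : ℝ} (hs : s ∈ Ico l T) : g s ≤ L := by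
  refine ge_of_tendsto hlim ?_
  filter_upwards [Ioo_mem_nhdsLT hs.2] with t ht
  exact hg hs ⟨hs.1.trans ht.1.le, ht.2⟩ ht.1.le

theorem monotoneOn_inv_add_mul_of_deriv_le_mul_sq {y y' : ℝ → ℝ} {c : ℝ} {S : Set ℝ}
    (hS : Convex ℝ S) (hy : ∀ t ∈ S, 0 < y t) (hderiv : ∀ t ∈ S, HasDerivAt y (y' t) t)
    (hineq : ∀ t ∈ S, y' t ≤ c * y t ^ 2) :
    MonotoneOn (fun t => (y t)⁻¹ + c * t) S := by
  have hg : ∀ t ∈ S, HasDerivAt (fun t => (y t)⁻¹ + c * t) (-(y' t) / y t ^ 2 + c) t :=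
    fun t ht => ((hderiv t ht).inv (hy t ht).ne').add
      ((hasDerivAt_id t).const_mul c |>.congr_deriv (mul_one c))
  refine monotoneOn_of_hasDerivWithinAt_nonneg hS
    (fun t ht => (hg t ht).continuousAt.continuousWithinAt)
    (fun t ht => (hg t (interior_subset ht)).hasDerivWithinAt) (fun t ht => ?_)
  have ht := interior_subset ht
  have hy2 : 0 < y t ^ 2 := pow_pos (hy t ht) 2
  rw [neg_div, neg_add_eq_sub, sub_nonneg, div_le_iff₀ hy2]
  exact hineq t ht

theorem inv_sub_le_mul_of_deriv_le_mul_sq {y y' : ℝ → ℝ} {c l T : ℝ}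
    (hy : ∀ t ∈ Ico l T, 0 < y t) (hderiv : ∀ t ∈ Ico l T, HasDerivAt y (y' t) t)
    (hineq : ∀ t ∈ Ico l T, y' t ≤ c * y t ^ 2) (hblow : Tendsto y (𝓝[<] T) atTop)
    {s : ℝ} (hs : s ∈ Ico l T) : (T - s)⁻¹ ≤ c * y s := by
  have hmono := monotoneOn_inv_add_mul_of_deriv_le_mul_sq (convex_Ico l T) hy hderiv hineq
  have hlim : Tendsto (fun t => (y t)⁻¹ + c * t) (𝓝[<] T) (𝓝 (0 + c * T)) :=
    hblow.inv_tendsto_atTop.add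
      (tendsto_nhdsWithin_of_tendsto_nhds (continuous_const_mul c).continuousAt)
  have hinv : (y s)⁻¹ ≤ c * (T - s) := by
    linarith [hmono.le_of_tendsto_nhdsLT hlim hs]
  rw [inv_le_iff_one_le_mul₀ (hy s hs)] at hinv
  rw [inv_le_iff_one_le_mul₀ (sub_pos.mpr hs.2)]
  linarith

theorem stmt19_general (a b tstar : ℝ) (htstar : 0 < tstar)
    (y y' : ℝ → ℝ)
    (hderiv : ∀ t ∈ Ico 0 tstar, HasDerivAt y (y' t) t)
    (hineq : ∀ t ∈ Ico 0 tstar, y' t ≤ a * y t ^ 2 + b)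
    (hint : MeasureTheory.IntegrableOn y (Ico 0 tstar))
    (hblow : Filter.Tendsto y (nhdsWithin tstar (Iio tstar)) Filter.atTop) :
    False := by
  obtain ⟨l₀, hl₀, hge⟩ := mem_nhdsLT_iff_exists_Ico_subset.mp (hblow.eventually_ge_atTop 1)
  set l := max 0 l₀
  have hlT : l < tstar := max_lt htstar hl₀
  have hsub : Ico l tstar ⊆ Ico 0 tstar := Ico_subset_Ico_left (le_max_left _ _)
  have hy1 : ∀ t ∈ Ico l tstar, 1 ≤ y t :=
    fun t ht => hge (Ico_subset_Ico_left (le_max_right _ _) ht)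
  set c := |a| + |b|
  have hricc : ∀ t ∈ Ico l tstar, y' t ≤ c * y t ^ 2 := by
    intro t ht
    have h1 : 1 ≤ y t ^ 2 := one_le_pow₀ (hy1 t ht)
    nlinarith [hineq t (hsub ht), le_abs_self a, le_abs_self b, abs_nonneg b]
  have hlow : ∀ s ∈ Ico l tstar, (tstar - s)⁻¹ ≤ c * y s :=
    fun s hs => inv_sub_le_mul_of_deriv_le_mul_sq (fun t ht => one_pos.trans_le (hy1 t ht))
      (fun t ht => hderiv t (hsub ht)) hricc hblow hs
  refine not_integrableOn_Ico_inv_sub hlT (Integrable.mono' ((hint.mono_set hsub).const_mul c)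
    (by fun_prop) ((ae_restrict_mem measurableSet_Ico).mono fun s hs => ?_))
  rw [Real.norm_of_nonneg (inv_nonneg.mpr (sub_pos.mpr hs.2).le)]
  exact hlow s hs

open Set in
/-- Local Riccati bound forbids integrable blow-up: a nonnegative `C¹` function `y`
on `[0,t*)` satisfying `y' ≤ a y² + b` that is integrable on `[0,t*)` cannot tend
to `+∞` as `t → t*⁻`. -/
theorem stmt19 (a b tstar : ℝ) (ha : 0 < a) (hb : 0 < b) (htstar : 0 < tstar)
    (y y' : ℝ → ℝ) (hpos : ∀ t ∈ Ico 0 tstar, 0 ≤ y t)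
    (hderiv : ∀ t ∈ Ico 0 tstar, HasDerivAt y (y' t) t)
    (hineq : ∀ t ∈ Ico 0 tstar, y' t ≤ a * y t ^ 2 + b)
    (hint : MeasureTheory.IntegrableOn y (Ico 0 tstar))
    (hblow : Filter.Tendsto y (nhdsWithin tstar (Iio tstar)) Filter.atTop) :
    False :=
  stmt19_general a b tstar htstar y y' hderiv hineq hint hblow
end
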